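/- arXiv:1607.02201 — 4 statements merged into one kernel-verified Lean document; each statement's English description precedes it below -/
import Mathlib

section
/- Let z ∈ ℂ with Im z > 0, let b_1,...,b_k ∈ ℂ with Im b_s ≥ 0 for all s, let H_1,...,H_r,...,H_k be complex matrices with H_r ≠ 0, and set T = (z·Id_p + Σ_s b_s H_s*H_s)^{-1}. Then the quantity f_r = -(1/n_r)·Tr(T H_r*H_r), where n_r > 0 is a positive real, has strictly positive imaginary part. -/
open Matrix

private lemma sum_mulVec' {k p : ℕ} (N : Fin k → Matrix (Fin p) (Fin p) ℂ) (v : Fin p → ℂ) :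
    (∑ s, N s) *ᵥ v = ∑ s, (N s *ᵥ v) := by
  ext i
  simp only [Matrix.mulVec, dotProduct, Finset.sum_apply, Matrix.sum_apply,
    Finset.sum_mul]
  rw [Finset.sum_comm]

private lemma dot_sum {k p : ℕ} (v : Fin p → ℂ) (f : Fin k → Fin p → ℂ) :
    v ⬝ᵥ (∑ s, f s) = ∑ s, v ⬝ᵥ f s := by
  simp only [dotProduct, Finset.sum_apply, Finset.mul_sum]
  rw [Finset.sum_comm]

private lemma dot_star_self_eq (p : ℕ) (w : Fin p → ℂ) :
    star w ⬝ᵥ w = ((∑ i, Complex.normSq (w i) : ℝ) : ℂ) := by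
  simp only [dotProduct, Pi.star_apply, RCLike.star_def]
  push_cast
  exact Finset.sum_congr rfl fun i _ => (Complex.normSq_eq_conj_mul_self).symm

private lemma trace_ct_mul_self (p : ℕ) (X : Matrix (Fin p) (Fin p) ℂ) :
    trace (Xᴴ * X) = ((∑ j, ∑ i, Complex.normSq (X i j) : ℝ) : ℂ) := by
  simp only [trace, diag, mul_apply, conjTranspose_apply, RCLike.star_def]
  push_cast
  refine Finset.sum_congr rfl fun j _ => Finset.sum_congr rfl fun i _ => ?_
  exact (Complex.normSq_eq_conj_mul_self).symm

private lemma trace_ct_mul_self_nonneg (p : ℕ) (X : Matrix (Fin p) (Fin p) ℂ) :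
    0 ≤ ∑ j, ∑ i, Complex.normSq (X i j) :=
  Finset.sum_nonneg fun _ _ => Finset.sum_nonneg fun _ _ => Complex.normSq_nonneg _

private lemma trace_ct_mul_self_pos (p : ℕ) (X : Matrix (Fin p) (Fin p) ℂ) (hX : X ≠ 0) :
    0 < ∑ j, ∑ i, Complex.normSq (X i j) := by
  rcases (trace_ct_mul_self_nonneg p X).lt_or_eq with h | h
  · exact h
  · exfalso
    apply hX
    ext i j
    have h0 : ∀ j' ∈ Finset.univ, (0:ℝ) ≤ ∑ i, Complex.normSq (X i j') :=
      fun _ _ => Finset.sum_nonneg fun _ _ => Complex.normSq_nonneg _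
    have hj := (Finset.sum_eq_zero_iff_of_nonneg h0).mp h.symm j (Finset.mem_univ j)
    have hi := (Finset.sum_eq_zero_iff_of_nonneg
      (fun _ _ => Complex.normSq_nonneg _)).mp hj i (Finset.mem_univ i)
    simpa using Complex.normSq_eq_zero.mp hi

set_option maxHeartbeats 1000000 in
/-- With `T = (z·Id_p + ∑ₛ bₛ Hₛ*Hₛ)⁻¹` and `H_r ≠ 0`, the quantity
`f_r = -(1/n_r)·Tr(T H_r*H_r)` has strictly positive imaginary part. -/
theorem stmt1 (p k : ℕ) (z : ℂ) (hz : 0 < z.im)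
    (b : Fin k → ℂ) (hb : ∀ s, 0 ≤ (b s).im)
    (H : Fin k → Matrix (Fin p) (Fin p) ℂ)
    (r : Fin k) (hHr : H r ≠ 0) (nr : ℝ) (hnr : 0 < nr) :
    0 < (-((nr : ℂ))⁻¹ *
        Matrix.trace ((z • (1 : Matrix (Fin p) (Fin p) ℂ)
          + ∑ s, b s • ((H s)ᴴ * H s))⁻¹ * ((H r)ᴴ * H r))).im := by
  set A : Matrix (Fin p) (Fin p) ℂ :=
    z • (1 : Matrix (Fin p) (Fin p) ℂ) + ∑ s, b s • ((H s)ᴴ * H s) with hA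
  -- A is a unit
  have hker : ∀ v : Fin p → ℂ, A *ᵥ v = 0 → v = 0 := by
    intro v hv
    by_contra hv0
    have hq : star v ⬝ᵥ (A *ᵥ v) = 0 := by rw [hv, dotProduct_zero]
    have hexp : star v ⬝ᵥ (A *ᵥ v)
        = z * ((∑ i, Complex.normSq (v i) : ℝ) : ℂ)
          + ∑ s, b s * ((∑ i, Complex.normSq ((H s *ᵥ v) i) : ℝ) : ℂ) := by
      rw [hA, add_mulVec, dotProduct_add, smul_mulVec, one_mulVec,
        dotProduct_smul, smul_eq_mul, dot_star_self_eq]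
      congr 1
      rw [sum_mulVec', dot_sum]
      refine Finset.sum_congr rfl fun s _ => ?_
      rw [smul_mulVec, dotProduct_smul, smul_eq_mul]
      congr 1
      rw [← mulVec_mulVec, dotProduct_mulVec, ← star_mulVec, dot_star_self_eq]
    have him : (star v ⬝ᵥ (A *ᵥ v)).im
        = z.im * (∑ i, Complex.normSq (v i))
          + ∑ s, (b s).im * (∑ i, Complex.normSq ((H s *ᵥ v) i)) := by
      rw [hexp]
      simp only [Complex.add_im, Complex.mul_im, Complex.ofReal_re, Complex.ofReal_im,
        mul_zero, add_zero, zero_add, Complex.im_sum]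
    have hvpos : 0 < ∑ i, Complex.normSq (v i) := by
      rcases (Finset.sum_nonneg fun i _ => Complex.normSq_nonneg (v i)).lt_or_eq with h | h
      · exact h
      · exfalso; apply hv0; funext i
        exact Complex.normSq_eq_zero.mp
          ((Finset.sum_eq_zero_iff_of_nonneg fun _ _ => Complex.normSq_nonneg _).mp
            h.symm i (Finset.mem_univ i))
    have : 0 < (star v ⬝ᵥ (A *ᵥ v)).im := by
      rw [him]
      have h1 : 0 < z.im * (∑ i, Complex.normSq (v i)) := mul_pos hz hvpos
      have h2 : 0 ≤ ∑ s, (b s).im * (∑ i, Complex.normSq ((H s *ᵥ v) i)) :=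
        Finset.sum_nonneg fun s _ => mul_nonneg (hb s)
          (Finset.sum_nonneg fun i _ => Complex.normSq_nonneg _)
      linarith
    rw [hq] at this; simp at this
  have hunit : IsUnit A := by
    rw [← Matrix.mulVec_injective_iff_isUnit]
    intro x y hxy
    have : A *ᵥ (x - y) = 0 := by rw [mulVec_sub, hxy, sub_self]
    have := hker _ this
    exact sub_eq_zero.mp this
  set T : Matrix (Fin p) (Fin p) ℂ := A⁻¹ with hT
  have hAT : A * T = 1 := Matrix.mul_nonsing_inv A ((Matrix.isUnit_iff_isUnit_det A).mp hunit)
  have hTA : T * A = 1 := Matrix.nonsing_inv_mul A ((Matrix.isUnit_iff_isUnit_det A).mp hunit)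
  -- conjugate transpose identity
  have hct : Tᴴ * Aᴴ = 1 := by
    rw [← conjTranspose_mul, hAT, conjTranspose_one]
  have hAH : Aᴴ = (starRingEnd ℂ z) • (1 : Matrix (Fin p) (Fin p) ℂ)
      + ∑ s, (starRingEnd ℂ (b s)) • ((H s)ᴴ * H s) := by
    rw [hA, conjTranspose_add, conjTranspose_smul, conjTranspose_one]
    congr 1
    rw [conjTranspose_sum]
    refine Finset.sum_congr rfl fun s _ => ?_
    rw [conjTranspose_smul, conjTranspose_mul, conjTranspose_conjTranspose,
      starRingEnd_apply]
  -- set up the real quantities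
  set c : ℝ := ∑ j, ∑ i, Complex.normSq ((H r * Tᴴ) i j) with hc
  set d : Fin k → ℝ := fun s => ∑ j, ∑ i, Complex.normSq ((H s * T * (H r)ᴴ) i j) with hd
  have htr1 : trace (T * ((H r)ᴴ * H r) * Tᴴ) = (c : ℂ) := by
    have : T * ((H r)ᴴ * H r) * Tᴴ = (H r * Tᴴ)ᴴ * (H r * Tᴴ) := by
      rw [conjTranspose_mul, conjTranspose_conjTranspose]
      noncomm_ring
    rw [this, trace_ct_mul_self]
  have htr2 : ∀ s, trace (T * ((H r)ᴴ * H r) * Tᴴ * ((H s)ᴴ * H s)) = ((d s : ℝ) : ℂ) := by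
    intro s
    have e1 : T * ((H r)ᴴ * H r) * Tᴴ * ((H s)ᴴ * H s)
        = (T * (H r)ᴴ) * (H r * Tᴴ * (H s)ᴴ * H s) := by noncomm_ring
    have e2 : (H r * Tᴴ * (H s)ᴴ * H s) * (T * (H r)ᴴ)
        = (H s * T * (H r)ᴴ)ᴴ * (H s * T * (H r)ᴴ) := by
      rw [conjTranspose_mul, conjTranspose_mul, conjTranspose_conjTranspose]
      noncomm_ring
    rw [e1, trace_mul_comm, e2, trace_ct_mul_self]
  have hcpos : 0 < c := by
    apply trace_ct_mul_self_pos
    intro h0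
    apply hHr
    have : H r * Tᴴ * Aᴴ = H r := by rw [mul_assoc, hct, mul_one]
    rw [← this, h0, zero_mul]
  have hdnn : ∀ s, 0 ≤ d s := fun s => trace_ct_mul_self_nonneg p _
  -- the key identity
  have hkey : trace (T * ((H r)ᴴ * H r))
      = (starRingEnd ℂ z) * (c : ℂ) + ∑ s, (starRingEnd ℂ (b s)) * ((d s : ℝ) : ℂ) := by
    have h1 : T * ((H r)ᴴ * H r) = T * ((H r)ᴴ * H r) * (Tᴴ * Aᴴ) := by
      rw [hct, mul_one]
    rw [h1, hAH]
    have e3 : T * ((H r)ᴴ * H r) * (Tᴴ * ((starRingEnd ℂ z) • (1 : Matrix (Fin p) (Fin p) ℂ)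
        + ∑ s, (starRingEnd ℂ (b s)) • ((H s)ᴴ * H s)))
      = (starRingEnd ℂ z) • (T * ((H r)ᴴ * H r) * Tᴴ)
        + ∑ s, (starRingEnd ℂ (b s)) • (T * ((H r)ᴴ * H r) * Tᴴ * ((H s)ᴴ * H s)) := by
      rw [Matrix.mul_add, Matrix.mul_add]
      congr 1
      · simp only [Matrix.mul_smul, Matrix.mul_one]
      · rw [Finset.mul_sum, Matrix.mul_sum]
        refine Finset.sum_congr rfl fun s _ => ?_
        simp only [Matrix.mul_smul]
        congr 1
        noncomm_ring
    rw [e3, trace_add, trace_smul, smul_eq_mul, htr1, trace_sum]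
    congr 1
    refine Finset.sum_congr rfl fun s _ => ?_
    rw [trace_smul, smul_eq_mul, htr2 s]
  -- conclude
  rw [hkey]
  have him : ((starRingEnd ℂ z) * (c : ℂ)
      + ∑ s, (starRingEnd ℂ (b s)) * ((d s : ℝ) : ℂ)).im
      = -(z.im * c + ∑ s, (b s).im * d s) := by
    simp only [Complex.add_im, Complex.mul_im, Complex.conj_re, Complex.conj_im,
      Complex.ofReal_re, Complex.ofReal_im, mul_zero, add_zero, zero_add, neg_mul,
      Complex.im_sum]
    rw [neg_add, ← Finset.sum_neg_distrib]
  have hpos : 0 < z.im * c + ∑ s, (b s).im * d s := by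
    have h2 : 0 ≤ ∑ s, (b s).im * d s :=
      Finset.sum_nonneg fun s _ => mul_nonneg (hb s) (hdnn s)
    have := mul_pos hz hcpos
    linarith
  have : (-((nr : ℂ))⁻¹ * ((starRingEnd ℂ z) * (c : ℂ)
      + ∑ s, (starRingEnd ℂ (b s)) * ((d s : ℝ) : ℂ))).im
      = nr⁻¹ * (z.im * c + ∑ s, (b s).im * d s) := by
    rw [show -((nr : ℂ))⁻¹ = ((-nr⁻¹ : ℝ) : ℂ) by push_cast; ring]
    simp only [Complex.mul_im, Complex.ofReal_re, Complex.ofReal_im, zero_mul, add_zero]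
    rw [him]
    ring
  rw [this]
  exact mul_pos (inv_pos.mpr hnr) hpos
end

section
/- Let F be an invertible Hermitian n×n complex matrix, let a_1,...,a_k ∈ ℂ have strictly positive imaginary parts, let P_1,...,P_k be orthogonal projections summing to Id_n, D(a) = Σ_s a_s P_s, and M = (F^{-1} + D(a))^{-1}. Then for each r, the quantity g_r = -(1/n_r)·Tr(P_r M), where n_r > 0 is real, has nonnegative imaginary part. -/
open Matrix

private lemma trace_selfmul (n : ℕ) (X : Matrix (Fin n) (Fin n) ℂ) :
    (Matrix.trace (X * Xᴴ)).im = 0 ∧ 0 ≤ (Matrix.trace (X * Xᴴ)).re := by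
  have h : Matrix.trace (X * Xᴴ) = ((∑ i, ∑ j, Complex.normSq (X i j) : ℝ) : ℂ) := by
    simp [Matrix.trace, Matrix.mul_apply, Matrix.conjTranspose_apply, Matrix.diag,
      Complex.mul_conj]
  rw [h]
  refine ⟨by simp, ?_⟩
  simp only [Complex.ofReal_re]
  refine Finset.sum_nonneg fun i _ => Finset.sum_nonneg fun j _ => Complex.normSq_nonneg _

private lemma trace_herm_im (n : ℕ) (A B : Matrix (Fin n) (Fin n) ℂ)
    (hA : Aᴴ = A) (hB : Bᴴ = B) : (Matrix.trace (A * B)).im = 0 := by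
  rw [← Complex.conj_eq_iff_im]
  calc (starRingEnd ℂ) (Matrix.trace (A * B)) = star (Matrix.trace (A * B)) := rfl
    _ = Matrix.trace ((A * B)ᴴ) := (Matrix.trace_conjTranspose _).symm
    _ = Matrix.trace (Bᴴ * Aᴴ) := by rw [Matrix.conjTranspose_mul]
    _ = Matrix.trace (A * B) := by rw [hA, hB, Matrix.trace_mul_comm]

private lemma trace_sandwich (n : ℕ) (Q R N : Matrix (Fin n) (Fin n) ℂ)
    (hQ : Qᴴ = Q) (hQi : Q * Q = Q) (hR : Rᴴ = R) (hRi : R * R = R) :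
    Matrix.trace (Q * (N * R * Nᴴ)) =
      Matrix.trace ((Q * N * R) * (Q * N * R)ᴴ) := by
  have h1 : (Q * N * R)ᴴ = R * Nᴴ * Q := by
    simp [Matrix.conjTranspose_mul, hQ, hR, mul_assoc]
  rw [h1]
  have e0 : Q * N * R * (R * Nᴴ * Q) = Q * N * R * (R * Nᴴ) * Q := by
    simp only [mul_assoc]
  have e1 : Q * (Q * N * R) * (R * Nᴴ) = Q * (N * R * Nᴴ) := by
    simp only [← mul_assoc]
    rw [hQi, mul_assoc (Q * N) R R, hRi]
  rw [e0, Matrix.trace_mul_cycle, e1]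

/-- For invertible Hermitian `F`, `aₛ` with positive imaginary parts, orthogonal
projections `Pₛ` summing to the identity, and `M = (F⁻¹ + D(a))⁻¹`, the quantity
`g_r = -(1/n_r)·Tr(P_r M)` has nonnegative imaginary part. -/
theorem stmt4 (n k : ℕ) (F : Matrix (Fin n) (Fin n) ℂ)
    (hF : F.IsHermitian) (hFu : IsUnit F)
    (a : Fin k → ℂ) (ha : ∀ s, 0 < (a s).im)
    (P : Fin k → Matrix (Fin n) (Fin n) ℂ)
    (hPsa : ∀ s, (P s)ᴴ = P s) (hPidem : ∀ s, P s * P s = P s)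
    (hPsum : ∑ s, P s = 1)
    (r : Fin k) (nr : ℝ) (hnr : 0 < nr) :
    0 ≤ (-((nr : ℂ))⁻¹ *
        Matrix.trace (P r * (F⁻¹ + ∑ s, a s • P s)⁻¹)).im := by
  set B : Matrix (Fin n) (Fin n) ℂ := F⁻¹ + ∑ s, a s • P s with hBdef
  by_cases hBu : IsUnit B.det
  · set M : Matrix (Fin n) (Fin n) ℂ := B⁻¹ with hMdef
    have hMc : Mᴴ = (Bᴴ)⁻¹ := Matrix.conjTranspose_nonsing_inv B
    have hBHdet : IsUnit (Bᴴ).det := by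
      rw [Matrix.det_conjTranspose]; exact hBu.star
    have hBHMH : Bᴴ * Mᴴ = 1 := by rw [hMc]; exact Matrix.mul_nonsing_inv _ hBHdet
    have hBH : Bᴴ = F⁻¹ + ∑ s, (starRingEnd ℂ) (a s) • P s := by
      rw [hBdef, Matrix.conjTranspose_add, hF.inv.eq, Matrix.conjTranspose_sum]
      congr 1
      refine Finset.sum_congr rfl fun s _ => ?_
      rw [Matrix.conjTranspose_smul, hPsa s]; rfl
    have key : M = M * F⁻¹ * Mᴴ + ∑ s, (starRingEnd ℂ) (a s) • (M * P s * Mᴴ) := by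
      calc M = M * (Bᴴ * Mᴴ) := by rw [hBHMH, mul_one]
        _ = M * Bᴴ * Mᴴ := by rw [mul_assoc]
        _ = _ := by
            rw [hBH]
            simp [mul_add, add_mul, Finset.mul_sum, Finset.sum_mul,
              Matrix.mul_smul, Matrix.smul_mul]
    have htr : Matrix.trace (P r * M)
        = Matrix.trace (P r * (M * F⁻¹ * Mᴴ))
          + ∑ s, (starRingEnd ℂ) (a s) * Matrix.trace (P r * (M * P s * Mᴴ)) := by
      conv_lhs => rw [key]
      rw [mul_add, Matrix.trace_add, Finset.mul_sum, Matrix.trace_sum]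
      congr 1
      refine Finset.sum_congr rfl fun s _ => ?_
      rw [Matrix.mul_smul, Matrix.trace_smul, smul_eq_mul]
    have h1 : (Matrix.trace (P r * (M * F⁻¹ * Mᴴ))).im = 0 := by
      refine trace_herm_im n _ _ (hPsa r) ?_
      calc (M * F⁻¹ * Mᴴ)ᴴ = Mᴴᴴ * (M * F⁻¹)ᴴ := by rw [Matrix.conjTranspose_mul]
        _ = M * (F⁻¹ᴴ * Mᴴ) := by rw [Matrix.conjTranspose_mul, Matrix.conjTranspose_conjTranspose]
        _ = M * F⁻¹ * Mᴴ := by rw [hF.inv.eq, mul_assoc]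
    have h2 : ∀ s, (Matrix.trace (P r * (M * P s * Mᴴ))).im = 0 ∧
        0 ≤ (Matrix.trace (P r * (M * P s * Mᴴ))).re := by
      intro s
      rw [trace_sandwich n (P r) (P s) M (hPsa r) (hPidem r) (hPsa s) (hPidem s)]
      exact trace_selfmul n _
    have hTim : (Matrix.trace (P r * M)).im ≤ 0 := by
      rw [htr]
      rw [Complex.add_im, h1, zero_add, Complex.im_sum]
      refine Finset.sum_nonpos fun s _ => ?_
      rw [Complex.mul_im, (h2 s).1, mul_zero, zero_add]
      simp only [Complex.conj_im]
      exact mul_nonpos_of_nonpos_of_nonneg (by linarith [ha s]) (h2 s).2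
    have : (-((nr : ℂ))⁻¹ * Matrix.trace (P r * M)) =
        (((-nr⁻¹ : ℝ)) : ℂ) * Matrix.trace (P r * M) := by push_cast; ring
    rw [this]
    simp only [Complex.mul_im, Complex.ofReal_im, Complex.ofReal_re, zero_mul, add_zero]
    have : 0 < nr⁻¹ := by positivity
    nlinarith
  · rw [Matrix.nonsing_inv_apply_not_isUnit B hBu]
    simp
end

section
/- Let M_1,...,M_L be complex N×N matrices with operator norms ‖M_ℓ‖ ≤ B, and let q, q' : {1,...,L} → {1,...,Q} be maps. Call an index q₀ ∈ {1,...,Q} 'good' if exactly two elements among q(1),...,q(L),q'(1),...,q'(L) equal q₀, and whenever q(ℓ) = q'(ℓ) = q₀ for some ℓ, one has Tr M_ℓ = 0. Let T be the number of good indices. Then there exists a constant C depending only on L, Q, B (not on N) such that |Σ*_{α_1,...,α_Q} Π_{ℓ=1}^L M_ℓ[α_{q(ℓ)}, α_{q'(ℓ)}]| ≤ C·N^{Q - T/2}, where Σ* ranges over all Q-tuples of pairwise distinct indices α_1,...,α_Q ∈ {1,...,N}. -/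
/-!
Read the index pairs `(q ℓ, q' ℓ)` as the edges of a multigraph on `{1, …, Q}`, edge `ℓ`
carrying the matrix `M ℓ`; a good vertex has degree two, and a loop at a good vertex has trace
zero. Write `N` for the matrix size.

If a good vertex `v` carries a loop `ℓ`, then summing `α_v` over the values not taken by the
other indices produces `Tr M_ℓ` minus the diagonal entries at those values. As `Tr M_ℓ = 0`, the
sum, times `N` (the now free index `α_v`), is minus the sum over `w ≠ v` of the configurations
with the loop moved to `w`. Moving a loop loses at most the two good vertices `v` and `w`, and
an induction on the number of indices constrained to be distinct removes all such loops.

Without loops at good vertices, drop the distinctness constraint and take absolute values. The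
rows and columns of `M_ℓ` have `ℓ²`-norm at most `B`, so by Cauchy–Schwarz, summing out a vertex
with `k ≤ 2` incident edges costs `B^k N^{1 - k/2}` instead of `N`. Summing out the good vertices
one after the other removes every edge at a good vertex exactly once, and there are at least as
many such edges as good vertices: each good vertex has two, and each edge has two endpoints.
-/

open Matrix

open Finset Function

lemma sum_prod_mul_sqrt_card_pow_le_of_card_le_two {ι α : Type*} [DecidableEq ι] [Fintype α]
    {t : Finset ι} (ht : #t ≤ 2) {f : ι → α → ℝ} {B : ℝ} (hB : 0 ≤ B)
    (hsq : ∀ i ∈ t, ∑ a, f i a ^ 2 ≤ B ^ 2) :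
    (∑ a, ∏ i ∈ t, f i a) * √(Fintype.card α) ^ #t ≤ B ^ #t * Fintype.card α := by
  have hN := Real.sq_sqrt (Nat.cast_nonneg (α := ℝ) (Fintype.card α))
  interval_cases h : #t
  · simp [card_eq_zero.mp h]
  · obtain ⟨i, rfl⟩ := card_eq_one.mp h
    have hcs := sq_sum_le_card_mul_sum_sq (s := univ) (f := f i)
    have hi := hsq i (mem_singleton_self i)
    rw [card_univ] at hcs
    simp only [prod_singleton, pow_one]
    refine le_of_pow_le_pow_left₀ two_ne_zero (by positivity) ?_
    calc ((∑ a, f i a) * √(Fintype.card α)) ^ 2 = (∑ a, f i a) ^ 2 * Fintype.card α := by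
          rw [mul_pow, hN]
      _ ≤ (Fintype.card α * B ^ 2) * Fintype.card α := by gcongr; exact hcs.trans (by gcongr)
      _ = _ := by ring
  · obtain ⟨i, j, hij, rfl⟩ := card_eq_two.mp h
    simp only [prod_pair hij, hN]
    gcongr
    refine le_of_pow_le_pow_left₀ two_ne_zero (by positivity) ?_
    calc (∑ a, f i a * f j a) ^ 2 ≤ (∑ a, f i a ^ 2) * ∑ a, f j a ^ 2 :=
          sum_mul_sq_le_sq_mul_sq _ _ _
      _ ≤ B ^ 2 * B ^ 2 := by gcongr <;> simp_all
      _ = _ := by ring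

lemma Real.rpow_sub_half_eq_div_sqrt_pow {x : ℝ} (hx : 0 < x) (Q T : ℕ) :
    x ^ ((Q : ℝ) - T / 2) = x ^ Q / √x ^ T := by
  rw [Real.rpow_sub hx, Real.rpow_natCast, Real.sqrt_eq_rpow, ← Real.rpow_mul_natCast hx.le]
  ring_nf

section L2OpNorm

open scoped Matrix.Norms.L2Operator

variable {m n 𝕜 : Type*} [Fintype m] [Fintype n] [RCLike 𝕜]

lemma Matrix.sum_sq_norm_col_le_l2_opNorm_sq [DecidableEq n] (A : Matrix m n 𝕜) (j : n) :
    ∑ i, ‖A i j‖ ^ 2 ≤ ‖A‖ ^ 2 := by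
  have hcol : (EuclideanSpace.equiv m 𝕜).symm (A *ᵥ EuclideanSpace.single j 1) =
      WithLp.toLp 2 (fun i => A i j) := by
    ext i; simp [mulVec_single]
  have h := A.l2_opNorm_mulVec (EuclideanSpace.single j 1)
  rw [PiLp.norm_single, norm_one, mul_one, hcol] at h
  simpa [EuclideanSpace.norm_sq_eq] using pow_le_pow_left₀ (norm_nonneg _) h 2

lemma Matrix.sum_sq_norm_row_le_l2_opNorm_sq [DecidableEq m] [DecidableEq n] (A : Matrix m n 𝕜)
    (i : m) : ∑ j, ‖A i j‖ ^ 2 ≤ ‖A‖ ^ 2 := by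
  simpa [l2_opNorm_conjTranspose] using Aᴴ.sum_sq_norm_col_le_l2_opNorm_sq i

lemma Matrix.norm_apply_le_l2_opNorm [DecidableEq n] (A : Matrix m n 𝕜) (i : m) (j : n) :
    ‖A i j‖ ≤ ‖A‖ :=
  pow_le_pow_iff_left₀ (norm_nonneg _) (norm_nonneg _) two_ne_zero |>.mp <|
    (single_le_sum (fun k _ => sq_nonneg ‖A k j‖) (mem_univ i)).trans
      (A.sum_sq_norm_col_le_l2_opNorm_sq j)

lemma Matrix.sum_sq_norm_update_le {V : Type*} [DecidableEq V] [DecidableEq n] {A : Matrix n n 𝕜}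
    {x y v : V} (h : Xor (x = v) (y = v)) (α : V → n) :
    ∑ a, ‖A (update α v a x) (update α v a y)‖ ^ 2 ≤ ‖A‖ ^ 2 := by
  rcases h with ⟨rfl, hy⟩ | ⟨rfl, hx⟩
  · simpa [update_of_ne hy] using A.sum_sq_norm_col_le_l2_opNorm_sq (α y)
  · simpa [update_of_ne hx] using A.sum_sq_norm_row_le_l2_opNorm_sq (α x)

end L2OpNorm

lemma Finset.injOn_update_iff {α β : Type*} [DecidableEq α] {A : Finset α} {v : α} (hv : v ∈ A)
    (f : α → β) (b : β) :
    Set.InjOn (update f v b) A ↔ Set.InjOn f (A.erase v) ∧ b ∉ f '' ↑(A.erase v) := by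
  have hA : (A : Set α) = insert v ↑(A.erase v) := by simp [hv]
  have hEq : Set.EqOn (update f v b) f ↑(A.erase v) := fun x hx =>
    update_of_ne (ne_of_mem_erase hx) _ _
  rw [hA, Set.injOn_insert (by simp), hEq.injOn_iff, hEq.image_eq, update_self]

lemma Matrix.sum_filter_notMem_image_diag {V n R : Type*} [Fintype n] [DecidableEq n]
    [AddCommGroup R] (A : Matrix n n R) {s : Finset V} {α : V → n} (hα : Set.InjOn α s) :
    ∑ a with a ∉ s.image α, A a a = A.trace - ∑ w ∈ s, A (α w) (α w) := by
  rw [eq_sub_iff_add_eq, ← sum_image (f := fun a => A a a) hα, trace, add_comm,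
    ← sum_filter_add_sum_filter_not univ (· ∈ s.image α), filter_mem_eq_inter, univ_inter]
  rfl

lemma Fintype.sum_sum_update_eq_card_smul {ι α M : Type*} [Fintype ι] [DecidableEq ι] [Fintype α]
    [AddCommMonoid M] (S : (ι → α) → M) (v : ι) :
    ∑ f : ι → α, ∑ a, S (update f v a) = Fintype.card α • ∑ f, S f := by
  let e : Equiv.Perm ((ι → α) × α) :=
    { toFun p := (update p.1 v p.2, p.1 v)
      invFun p := (update p.1 v p.2, p.1 v)
      left_inv p := by simp
      right_inv p := by simp }
  calc ∑ f : ι → α, ∑ a, S (update f v a) = ∑ p : (ι → α) × α, S (update p.1 v p.2) :=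
        (Fintype.sum_prod_type' fun f a => S (update f v a)).symm
    _ = ∑ p : (ι → α) × α, S p.1 := Fintype.sum_equiv e _ _ fun p => rfl
    _ = _ := by rw [Fintype.sum_prod_type' fun f _ => S f]; simp [smul_sum]

section Multigraph

variable {V E : Type*} [DecidableEq V]

/-- Edge `ℓ ∈ Λ` joins `r ℓ` to `c ℓ`; a loop counts twice. -/
def incidence (Λ : Finset E) (r c : E → V) (v : V) : ℕ :=
  #{ℓ ∈ Λ | r ℓ = v} + #{ℓ ∈ Λ | c ℓ = v}

def edgesAt (Λ : Finset E) (r c : E → V) (G : Finset V) : Finset E :=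
  {ℓ ∈ Λ | r ℓ ∈ G ∨ c ℓ ∈ G}

lemma incidence_mono {Λ' Λ : Finset E} (h : Λ' ⊆ Λ) (r c : E → V) (v : V) :
    incidence Λ' r c v ≤ incidence Λ r c v :=
  add_le_add (card_le_card (filter_subset_filter _ h)) (card_le_card (filter_subset_filter _ h))

lemma card_edgesAt_insert [DecidableEq E] (Λ : Finset E) (r c : E → V) (v : V) (G : Finset V) :
    #(edgesAt Λ r c (insert v G)) =
      #(edgesAt (Λ \ edgesAt Λ r c {v}) r c G) + #(edgesAt Λ r c {v}) := by
  rw [← card_union_of_disjoint (s := edgesAt (Λ \ edgesAt Λ r c {v}) r c G)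
    (disjoint_sdiff_self_left.mono_left (filter_subset _ _))]
  congr 1
  ext ℓ
  simp only [edgesAt, mem_union, mem_filter, mem_sdiff, mem_insert, mem_singleton]
  tauto

lemma card_le_card_edgesAt {Λ : Finset E} {r c : E → V} {G : Finset V}
    (hG : ∀ v ∈ G, incidence Λ r c v = 2) : #G ≤ #(edgesAt Λ r c G) := by
  have hdouble : #G * 2 = #{ℓ ∈ Λ | r ℓ ∈ G} + #{ℓ ∈ Λ | c ℓ ∈ G} := by
    rw [← sum_const_nat hG, ← sum_card_fiberwise_eq_card_filter,
      ← sum_card_fiberwise_eq_card_filter, ← sum_add_distrib]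
    rfl
  have hr : #{ℓ ∈ Λ | r ℓ ∈ G} ≤ #(edgesAt Λ r c G) :=
    card_le_card (monotone_filter_right _ fun _ _ => Or.inl)
  have hc : #{ℓ ∈ Λ | c ℓ ∈ G} ≤ #(edgesAt Λ r c G) :=
    card_le_card (monotone_filter_right _ fun _ _ => Or.inr)
  omega

lemma ne_of_incidence_eq_two_of_loop {Λ : Finset E} {r c : E → V} {v : V} {ℓv : E}
    (hv : incidence Λ r c v = 2) (hℓv : ℓv ∈ Λ) (hr : r ℓv = v) (hc : c ℓv = v) :
    ∀ ℓ ∈ Λ, ℓ ≠ ℓv → r ℓ ≠ v ∧ c ℓ ≠ v := by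
  intro ℓ hℓ hne
  have hr1 : 0 < #{ℓ ∈ Λ | r ℓ = v} := card_pos.2 ⟨ℓv, mem_filter.2 ⟨hℓv, hr⟩⟩
  have hc1 : 0 < #{ℓ ∈ Λ | c ℓ = v} := card_pos.2 ⟨ℓv, mem_filter.2 ⟨hℓv, hc⟩⟩
  have htwo (p : E → Prop) [DecidablePred p] (hp : p ℓ) (hpv : p ℓv) : 1 < #{ℓ ∈ Λ | p ℓ} :=
    one_lt_card.2 ⟨ℓ, mem_filter.2 ⟨hℓ, hp⟩, ℓv, mem_filter.2 ⟨hℓv, hpv⟩, hne⟩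
  unfold incidence at hv
  constructor <;> intro h
  · have := htwo (r · = v) h hr; omega
  · have := htwo (c · = v) h hc; omega

end Multigraph

section EntrySums

open scoped Matrix.Norms.L2Operator

variable {V E n 𝕜 : Type*} [Fintype V] [DecidableEq V] [Fintype n] [RCLike 𝕜]

open scoped Classical in
noncomputable def goodVertices (M : E → Matrix n n 𝕜) (Λ : Finset E) (r c : E → V) : Finset V :=
  {v | incidence Λ r c v = 2 ∧ ∀ ℓ ∈ Λ, r ℓ = v → c ℓ = v → (M ℓ).trace = 0}

lemma mem_goodVertices {M : E → Matrix n n 𝕜} {Λ : Finset E} {r c : E → V} {v : V} :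
    v ∈ goodVertices M Λ r c ↔
      incidence Λ r c v = 2 ∧ ∀ ℓ ∈ Λ, r ℓ = v → c ℓ = v → (M ℓ).trace = 0 := by
  simp [goodVertices]

lemma card_goodVertices_le_update_add_two [DecidableEq E] {M : E → Matrix n n 𝕜}
    {Λ : Finset E} {r c : E → V} {v : V} {ℓv : E} (hr : r ℓv = v) (hc : c ℓv = v) (w : V) :
    #(goodVertices M Λ r c) ≤ #(goodVertices M Λ (update r ℓv w) (update c ℓv w)) + 2 := by
  have hsub : goodVertices M Λ r c \ {v, w} ⊆
      goodVertices M Λ (update r ℓv w) (update c ℓv w) := by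
    intro u hu
    simp only [mem_sdiff, mem_insert, mem_singleton, not_or] at hu
    obtain ⟨hu, huv, huw⟩ := hu
    have hfix (f : E → V) (hf : f ℓv = v) (ℓ : E) : update f ℓv w ℓ = u ↔ f ℓ = u := by
      rcases eq_or_ne ℓ ℓv with rfl | hℓ
      · simp [hf, Ne.symm huv, Ne.symm huw]
      · rw [update_of_ne hℓ]
    have hinc : incidence Λ (update r ℓv w) (update c ℓv w) u = incidence Λ r c u := by
      simp only [incidence, hfix r hr, hfix c hc]
    rw [mem_goodVertices] at hu ⊢
    simpa only [hinc, hfix r hr, hfix c hc] using hu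
  calc #(goodVertices M Λ r c)
      ≤ #(goodVertices M Λ r c \ {v, w}) + #({v, w} : Finset V) := card_le_card_sdiff_add_card
    _ ≤ _ := add_le_add (card_le_card hsub) card_le_two

def normSum (M : E → Matrix n n 𝕜) (Λ : Finset E) (r c : E → V) : ℝ :=
  ∑ α : V → n, ∏ ℓ ∈ Λ, ‖M ℓ (α (r ℓ)) (α (c ℓ))‖

lemma card_mul_normSum_eq_sum_sum_update [DecidableEq E] (M : E → Matrix n n 𝕜)
    (Λ : Finset E) (r c : E → V) (v : V) :
    Fintype.card n * normSum M Λ r c =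
      ∑ α : V → n, (∏ ℓ ∈ Λ \ edgesAt Λ r c {v}, ‖M ℓ (α (r ℓ)) (α (c ℓ))‖) *
        ∑ a, ∏ ℓ ∈ edgesAt Λ r c {v}, ‖M ℓ (update α v a (r ℓ)) (update α v a (c ℓ))‖ := by
  rw [← nsmul_eq_mul, normSum, ← Fintype.sum_sum_update_eq_card_smul _ v]
  refine sum_congr rfl fun α _ => ?_
  rw [mul_sum]
  refine sum_congr rfl fun a _ => ?_
  rw [← prod_sdiff (show edgesAt Λ r c {v} ⊆ Λ from filter_subset _ _)]
  congr 1
  refine prod_congr rfl fun ℓ hℓ => ?_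
  simp only [edgesAt, mem_sdiff, mem_filter, mem_singleton, not_and, not_or] at hℓ
  rw [update_of_ne (hℓ.2 hℓ.1).1, update_of_ne (hℓ.2 hℓ.1).2]

variable [DecidableEq n]

def distinctSum (M : E → Matrix n n 𝕜) (A : Finset V) (Λ : Finset E) (r c : E → V) : 𝕜 :=
  ∑ α : V → n, if Set.InjOn α A then ∏ ℓ ∈ Λ, M ℓ (α (r ℓ)) (α (c ℓ)) else 0

variable {M : E → Matrix n n 𝕜} {B : ℝ}

lemma norm_distinctSum_le_normSum (A : Finset V) (Λ : Finset E) (r c : E → V) :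
    ‖distinctSum M A Λ r c‖ ≤ normSum M Λ r c := by
  refine (norm_sum_le _ _).trans (sum_le_sum fun α _ => ?_)
  split_ifs
  · rw [norm_prod]
  · simpa using prod_nonneg fun ℓ _ => norm_nonneg _

lemma normSum_le (hM : ∀ ℓ, ‖M ℓ‖ ≤ B) (Λ : Finset E) (r c : E → V) :
    normSum M Λ r c ≤ B ^ #Λ * Fintype.card n ^ Fintype.card V := by
  calc normSum M Λ r c ≤ ∑ _α : V → n, ∏ _ℓ ∈ Λ, B :=
        sum_le_sum fun α _ => prod_le_prod (fun _ _ => norm_nonneg _)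
          fun ℓ _ => ((M ℓ).norm_apply_le_l2_opNorm _ _).trans (hM ℓ)
    _ = _ := by simp [mul_comm]

lemma normSum_mul_sqrt_pow_le_normSum_sdiff [DecidableEq E] [Nonempty n] (hB : 0 ≤ B)
    (hM : ∀ ℓ, ‖M ℓ‖ ≤ B) {Λ : Finset E} {r c : E → V} {v : V} (hv : incidence Λ r c v ≤ 2)
    (hloop : ∀ ℓ ∈ Λ, ¬(r ℓ = v ∧ c ℓ = v)) :
    normSum M Λ r c * √(Fintype.card n) ^ #(edgesAt Λ r c {v})
      ≤ B ^ #(edgesAt Λ r c {v}) * normSum M (Λ \ edgesAt Λ r c {v}) r c := by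
  set t := edgesAt Λ r c {v}
  set N : ℝ := (Fintype.card n : ℝ)
  have ht : #t ≤ 2 := by
    refine le_trans ?_ hv
    simp only [t, edgesAt, mem_singleton, filter_or]
    exact card_union_le _ _
  have hlocal (α : V → n) :
      (∑ a, ∏ ℓ ∈ t, ‖M ℓ (update α v a (r ℓ)) (update α v a (c ℓ))‖) * √N ^ #t ≤ B ^ #t * N :=
    sum_prod_mul_sqrt_card_pow_le_of_card_le_two ht hB fun ℓ hℓ => by
      simp only [t, edgesAt, mem_filter, mem_singleton] at hℓ
      exact ((M ℓ).sum_sq_norm_update_le (xor_iff_or_and_not_and _ _ |>.2 ⟨hℓ.2, hloop ℓ hℓ.1⟩)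
        α).trans (pow_le_pow_left₀ (norm_nonneg _) (hM ℓ) 2)
  refine le_of_mul_le_mul_left ?_ (Nat.cast_pos.2 Fintype.card_pos : (0 : ℝ) < N)
  calc N * (normSum M Λ r c * √N ^ #t)
      = ∑ α : V → n, (∏ ℓ ∈ Λ \ t, ‖M ℓ (α (r ℓ)) (α (c ℓ))‖) *
          ((∑ a, ∏ ℓ ∈ t, ‖M ℓ (update α v a (r ℓ)) (update α v a (c ℓ))‖) * √N ^ #t) := by
        rw [← mul_assoc, card_mul_normSum_eq_sum_sum_update M Λ r c v, sum_mul]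
        simp only [mul_assoc]
        rfl
    _ ≤ ∑ α : V → n, (∏ ℓ ∈ Λ \ t, ‖M ℓ (α (r ℓ)) (α (c ℓ))‖) * (B ^ #t * N) :=
        sum_le_sum fun α _ => mul_le_mul_of_nonneg_left (hlocal α) (by positivity)
    _ = N * (B ^ #t * normSum M (Λ \ t) r c) := by
        rw [normSum, ← sum_mul]; ring

lemma normSum_mul_sqrt_pow_card_edgesAt_le [DecidableEq E] [Nonempty n] (hB : 0 ≤ B)
    (hM : ∀ ℓ, ‖M ℓ‖ ≤ B) (G : Finset V) {Λ : Finset E} {r c : E → V}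
    (hG : ∀ v ∈ G, incidence Λ r c v ≤ 2) (hloop : ∀ v ∈ G, ∀ ℓ ∈ Λ, ¬(r ℓ = v ∧ c ℓ = v)) :
    normSum M Λ r c * √(Fintype.card n) ^ #(edgesAt Λ r c G)
      ≤ B ^ #Λ * Fintype.card n ^ Fintype.card V := by
  induction G using Finset.induction_on generalizing Λ with
  | empty => simpa [edgesAt] using normSum_le hM Λ r c
  | insert v G _ ih =>
    set t := edgesAt Λ r c {v}
    have hpeel := normSum_mul_sqrt_pow_le_normSum_sdiff hB hM (hG v (mem_insert_self v G))
      (hloop v (mem_insert_self v G))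
    have hrest := ih (Λ := Λ \ t)
      (fun w hw => (incidence_mono sdiff_subset r c w).trans (hG w (mem_insert_of_mem hw)))
      (fun w hw ℓ hℓ => hloop w (mem_insert_of_mem hw) ℓ (mem_sdiff.1 hℓ).1)
    calc normSum M Λ r c * √(Fintype.card n) ^ #(edgesAt Λ r c (insert v G))
        = normSum M Λ r c * √(Fintype.card n) ^ #t *
            √(Fintype.card n) ^ #(edgesAt (Λ \ t) r c G) := by
          rw [card_edgesAt_insert, pow_add]; ring
      _ ≤ B ^ #t * (normSum M (Λ \ t) r c * √(Fintype.card n) ^ #(edgesAt (Λ \ t) r c G)) := by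
          rw [← mul_assoc]; gcongr
      _ ≤ B ^ #t * (B ^ #(Λ \ t) * Fintype.card n ^ Fintype.card V) := by gcongr
      _ = B ^ #Λ * Fintype.card n ^ Fintype.card V := by
          rw [← mul_assoc, ← pow_add, add_comm,
            card_sdiff_add_card_eq_card (show t ⊆ Λ from filter_subset _ _)]

lemma normSum_mul_sqrt_pow_card_goodVertices_le [DecidableEq E] [Nonempty n] (hB : 0 ≤ B)
    (hM : ∀ ℓ, ‖M ℓ‖ ≤ B) {Λ : Finset E} {r c : E → V}
    (hloop : ∀ v ∈ goodVertices M Λ r c, ∀ ℓ ∈ Λ, ¬(r ℓ = v ∧ c ℓ = v)) :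
    normSum M Λ r c * √(Fintype.card n) ^ #(goodVertices M Λ r c)
      ≤ B ^ #Λ * Fintype.card n ^ Fintype.card V := by
  have hgood : ∀ v ∈ goodVertices M Λ r c, incidence Λ r c v = 2 := fun v hv =>
    (mem_goodVertices.1 hv).1
  refine le_trans ?_ (normSum_mul_sqrt_pow_card_edgesAt_le hB hM _ (fun v hv => (hgood v hv).le)
    hloop)
  have h1 : (1 : ℝ) ≤ √(Fintype.card n) := Real.one_le_sqrt.2 (Nat.one_le_cast.2 Fintype.card_pos)
  gcongr
  · exact sum_nonneg fun _ _ => prod_nonneg fun _ _ => norm_nonneg _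
  · exact card_le_card_edgesAt hgood

lemma card_mul_distinctSum_eq_neg_sum_update [DecidableEq E] {A : Finset V} {Λ : Finset E}
    {r c : E → V} {v : V} {ℓv : E} (hvA : v ∈ A) (hℓv : ℓv ∈ Λ) (hr : r ℓv = v) (hc : c ℓv = v)
    (htr : (M ℓv).trace = 0) (honly : ∀ ℓ ∈ Λ, ℓ ≠ ℓv → r ℓ ≠ v ∧ c ℓ ≠ v) :
    (Fintype.card n : 𝕜) * distinctSum M A Λ r c =
      -∑ w ∈ A.erase v, distinctSum M (A.erase v) Λ (update r ℓv w) (update c ℓv w) := by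
  set P : (V → n) → 𝕜 := fun α => ∏ ℓ ∈ Λ.erase ℓv, M ℓ (α (r ℓ)) (α (c ℓ))
  have hP (α : V → n) (a : n) : P (update α v a) = P α :=
    prod_congr rfl fun ℓ hℓ => by
      obtain ⟨hr', hc'⟩ := honly ℓ (mem_of_mem_erase hℓ) (ne_of_mem_erase hℓ)
      rw [update_of_ne hr', update_of_ne hc']
  have hloop (α : V → n) : ∏ ℓ ∈ Λ, M ℓ (α (r ℓ)) (α (c ℓ)) = P α * M ℓv (α v) (α v) := by
    rw [← prod_erase_mul _ _ hℓv, hr, hc]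
  have hmoved (α : V → n) (w : V) :
      ∏ ℓ ∈ Λ, M ℓ (α (update r ℓv w ℓ)) (α (update c ℓv w ℓ)) = P α * M ℓv (α w) (α w) := by
    rw [← prod_erase_mul _ _ hℓv, update_self, update_self]
    congr 1
    exact prod_congr rfl fun ℓ hℓ => by
      rw [update_of_ne (ne_of_mem_erase hℓ), update_of_ne (ne_of_mem_erase hℓ)]
  have hfiber (α : V → n) :
      ∑ a, (if Set.InjOn (update α v a) A then
          ∏ ℓ ∈ Λ, M ℓ (update α v a (r ℓ)) (update α v a (c ℓ)) else 0) =
        -∑ w ∈ A.erase v, if Set.InjOn α (A.erase v) then P α * M ℓv (α w) (α w) else 0 := by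
    simp only [injOn_update_iff hvA, hloop, hP, update_self, ← coe_image, mem_coe]
    by_cases hα : Set.InjOn α (A.erase v)
    · simp only [hα, true_and, if_true, ← sum_filter, ← mul_sum,
        (M ℓv).sum_filter_notMem_image_diag hα, htr, zero_sub, mul_neg]
    · simp only [hα, false_and, if_false, sum_const_zero, neg_zero]
  calc (Fintype.card n : 𝕜) * distinctSum M A Λ r c =
      ∑ α : V → n, ∑ a, (if Set.InjOn (update α v a) A then
          ∏ ℓ ∈ Λ, M ℓ (update α v a (r ℓ)) (update α v a (c ℓ)) else 0) := by
        rw [← nsmul_eq_mul, distinctSum, ← Fintype.sum_sum_update_eq_card_smul _ v]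
    _ = _ := by
        simp only [hfiber, sum_neg_distrib, distinctSum, hmoved]
        rw [sum_comm]

lemma norm_distinctSum_mul_sqrt_pow_le_of_loop [DecidableEq E] [Nonempty n] {A : Finset V}
    {Λ : Finset E} {r c : E → V} {v : V} {ℓv : E} (hv : v ∈ goodVertices M Λ r c) (hvA : v ∈ A)
    (hℓv : ℓv ∈ Λ) (hr : r ℓv = v) (hc : c ℓv = v) {K : ℝ}
    (hK : ∀ w ∈ A.erase v, ‖distinctSum M (A.erase v) Λ (update r ℓv w) (update c ℓv w)‖ *
      √(Fintype.card n) ^ #(goodVertices M Λ (update r ℓv w) (update c ℓv w)) ≤ K) :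
    ‖distinctSum M A Λ r c‖ * √(Fintype.card n) ^ #(goodVertices M Λ r c) ≤ #(A.erase v) * K := by
  set N : ℝ := (Fintype.card n : ℝ)
  have hN : 0 < N := Nat.cast_pos.2 Fintype.card_pos
  obtain ⟨hinc, hgood⟩ := mem_goodVertices.1 hv
  have hkey := congrArg norm (card_mul_distinctSum_eq_neg_sum_update hvA hℓv hr hc
    (hgood ℓv hℓv hr hc) (ne_of_incidence_eq_two_of_loop hinc hℓv hr hc))
  rw [norm_mul, norm_neg, RCLike.norm_natCast] at hkey
  have hpow (w : V) : √N ^ #(goodVertices M Λ r c) ≤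
      √N ^ #(goodVertices M Λ (update r ℓv w) (update c ℓv w)) * N := by
    calc √N ^ #(goodVertices M Λ r c)
        ≤ √N ^ (#(goodVertices M Λ (update r ℓv w) (update c ℓv w)) + 2) :=
          pow_le_pow_right₀ (Real.one_le_sqrt.2 (Nat.one_le_cast.2 Fintype.card_pos))
            (card_goodVertices_le_update_add_two hr hc w)
      _ = _ := by rw [pow_add, Real.sq_sqrt hN.le]
  refine le_of_mul_le_mul_left ?_ hN
  calc N * (‖distinctSum M A Λ r c‖ * √N ^ #(goodVertices M Λ r c))
      = ‖∑ w ∈ A.erase v, distinctSum M (A.erase v) Λ (update r ℓv w) (update c ℓv w)‖ *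
          √N ^ #(goodVertices M Λ r c) := by rw [← mul_assoc, hkey]
    _ ≤ ∑ w ∈ A.erase v, ‖distinctSum M (A.erase v) Λ (update r ℓv w) (update c ℓv w)‖ *
          √N ^ #(goodVertices M Λ r c) := by
        rw [← sum_mul]; gcongr; exact norm_sum_le _ _
    _ ≤ ∑ w ∈ A.erase v, ‖distinctSum M (A.erase v) Λ (update r ℓv w) (update c ℓv w)‖ *
          (√N ^ #(goodVertices M Λ (update r ℓv w) (update c ℓv w)) * N) := by
        gcongr with w; exact hpow w
    _ ≤ ∑ w ∈ A.erase v, K * N := sum_le_sum fun w hw => by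
        rw [← mul_assoc]; exact mul_le_mul_of_nonneg_right (hK w hw) hN.le
    _ = N * (#(A.erase v) * K) := by rw [sum_const, nsmul_eq_mul]; ring

theorem norm_distinctSum_mul_sqrt_pow_le [DecidableEq E] [Nonempty n] (hB : 0 ≤ B)
    (hM : ∀ ℓ, ‖M ℓ‖ ≤ B) (A : Finset V) {Λ : Finset E} {r c : E → V}
    (hA : ∀ ℓ ∈ Λ, r ℓ ∈ A ∧ c ℓ ∈ A) :
    ‖distinctSum M A Λ r c‖ * √(Fintype.card n) ^ #(goodVertices M Λ r c)
      ≤ (Fintype.card V + 1) ^ #A * B ^ #Λ * Fintype.card n ^ Fintype.card V := by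
  induction A using Finset.strongInduction generalizing r c with
  | H A ih =>
  by_cases hloop : ∃ v ∈ goodVertices M Λ r c, ∃ ℓ ∈ Λ, r ℓ = v ∧ c ℓ = v
  · obtain ⟨v, hv, ℓv, hℓv, hr, hc⟩ := hloop
    have hvA : v ∈ A := hr ▸ (hA ℓv hℓv).1
    have honly := ne_of_incidence_eq_two_of_loop (mem_goodVertices.1 hv).1 hℓv hr hc
    have hA' (w : V) (hw : w ∈ A.erase v) (ℓ : E) (hℓ : ℓ ∈ Λ) :
        update r ℓv w ℓ ∈ A.erase v ∧ update c ℓv w ℓ ∈ A.erase v := by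
      rcases eq_or_ne ℓ ℓv with rfl | hne
      · simp [hw]
      · rw [update_of_ne hne, update_of_ne hne]
        exact ⟨mem_erase.2 ⟨(honly ℓ hℓ hne).1, (hA ℓ hℓ).1⟩,
          mem_erase.2 ⟨(honly ℓ hℓ hne).2, (hA ℓ hℓ).2⟩⟩
    refine (norm_distinctSum_mul_sqrt_pow_le_of_loop hv hvA hℓv hr hc fun w hw =>
      ih _ (erase_ssubset hvA) (hA' w hw)).trans ?_
    have hcard : (#(A.erase v) : ℝ) ≤ Fintype.card V + 1 := by
      exact_mod_cast (card_le_univ _).trans (Nat.le_succ _)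
    calc #(A.erase v) * ((Fintype.card V + 1) ^ #(A.erase v) * B ^ #Λ *
          Fintype.card n ^ Fintype.card V)
        ≤ (Fintype.card V + 1) * ((Fintype.card V + 1) ^ #(A.erase v) * B ^ #Λ *
          Fintype.card n ^ Fintype.card V) :=
          mul_le_mul_of_nonneg_right hcard (by have := pow_nonneg hB #Λ; positivity)
      _ = _ := by rw [← card_erase_add_one hvA, pow_succ]; ring
  · push Not at hloop
    calc ‖distinctSum M A Λ r c‖ * √(Fintype.card n) ^ #(goodVertices M Λ r c)
        ≤ normSum M Λ r c * √(Fintype.card n) ^ #(goodVertices M Λ r c) := by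
          gcongr; exact norm_distinctSum_le_normSum A Λ r c
      _ ≤ B ^ #Λ * Fintype.card n ^ Fintype.card V :=
          normSum_mul_sqrt_pow_card_goodVertices_le hB hM fun v hv ℓ hℓ h => hloop v hv ℓ hℓ h.1 h.2
      _ ≤ _ := by
          rw [mul_assoc]
          exact le_mul_of_one_le_left (by have := pow_nonneg hB #Λ; positivity)
            (one_le_pow₀ (le_add_of_nonneg_left (Nat.cast_nonneg _)))

theorem norm_distinctSum_univ_le [DecidableEq E] (hB : 0 ≤ B) (hM : ∀ ℓ, ‖M ℓ‖ ≤ B)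
    (Λ : Finset E) (r c : E → V) :
    ‖distinctSum M univ Λ r c‖ ≤ ((Fintype.card V : ℝ) + 1) ^ Fintype.card V * B ^ #Λ *
      (Fintype.card n : ℝ) ^ ((Fintype.card V : ℝ) - #(goodVertices M Λ r c) / 2) := by
  rcases isEmpty_or_nonempty n with hn | hn
  · have hT : #(goodVertices M Λ r c) ≤ Fintype.card V := card_le_univ _
    calc ‖distinctSum M univ Λ r c‖ ≤ normSum M Λ r c := norm_distinctSum_le_normSum _ _ _ _
      _ ≤ B ^ #Λ * (Fintype.card n : ℝ) ^ (Fintype.card V : ℝ) := by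
          rw [Real.rpow_natCast]; exact normSum_le hM Λ r c
      _ ≤ B ^ #Λ * (Fintype.card n : ℝ) ^ ((Fintype.card V : ℝ) - #(goodVertices M Λ r c) / 2) := by
          refine mul_le_mul_of_nonneg_left (Real.rpow_le_rpow_of_exponent_ge' (by positivity)
            (by simp) ?_ (by simp; positivity)) (pow_nonneg hB _)
          have : (#(goodVertices M Λ r c) : ℝ) ≤ Fintype.card V := by exact_mod_cast hT
          linarith
      _ ≤ _ := by
          rw [mul_assoc]
          exact le_mul_of_one_le_left (mul_nonneg (pow_nonneg hB _) (by positivity))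
            (one_le_pow₀ (le_add_of_nonneg_left (Nat.cast_nonneg _)))
  · have hN : (0 : ℝ) < Fintype.card n := Nat.cast_pos.2 Fintype.card_pos
    have h := norm_distinctSum_mul_sqrt_pow_le hB hM univ (Λ := Λ) (r := r) (c := c)
      fun _ _ => ⟨mem_univ _, mem_univ _⟩
    rw [card_univ] at h
    rw [Real.rpow_sub_half_eq_div_sqrt_pow hN, mul_div_assoc', le_div_iff₀ (by positivity)]
    exact h

end EntrySums

/-- Combinatorial entry-sum bound: if `‖M_ℓ‖ ≤ B` in ℓ²→ℓ² operator norm and `T`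
is the number of "good" indices, then the sum over tuples of distinct indices of
`∏_ℓ M_ℓ[α_{q(ℓ)}, α_{q'(ℓ)}]` is bounded by `C·N^{Q - T/2}` with `C` depending
only on `L, Q, B`. -/
theorem stmt8 (L Q : ℕ) (B : ℝ) :
    ∃ C : ℝ, ∀ (N : ℕ) (M : Fin L → Matrix (Fin N) (Fin N) ℂ),
      (∀ ℓ, ‖Matrix.toEuclideanCLM (𝕜 := ℂ) (M ℓ)‖ ≤ B) →
      ∀ (q q' : Fin L → Fin Q) (T : ℕ),
        T = Nat.card {q₀ : Fin Q //
          ((Finset.univ.filter (fun ℓ => q ℓ = q₀)).card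
            + (Finset.univ.filter (fun ℓ => q' ℓ = q₀)).card = 2)
          ∧ ∀ ℓ, q ℓ = q₀ → q' ℓ = q₀ → Matrix.trace (M ℓ) = 0} →
      ‖(∑ α : Fin Q → Fin N,
          if Function.Injective α then ∏ ℓ, M ℓ (α (q ℓ)) (α (q' ℓ)) else 0)‖
        ≤ C * (N : ℝ) ^ ((Q : ℝ) - T / 2) := by
  refine ⟨(Q + 1) ^ Q * |B| ^ L, fun N M hM q q' T hT => ?_⟩
  have hsum : (∑ α : Fin Q → Fin N,
      if Function.Injective α then ∏ ℓ, M ℓ (α (q ℓ)) (α (q' ℓ)) else 0) =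
        distinctSum M univ univ q q' := by
    simp [distinctSum, Set.injOn_univ]
  have hgood : T = #(goodVertices M univ q q') := by
    rw [hT, Nat.card_eq_fintype_card, Fintype.card_subtype]
    congr 1
    ext
    simp [mem_goodVertices, incidence]
  rw [hsum, hgood]
  simpa using norm_distinctSum_univ_le (abs_nonneg B) (fun ℓ => (hM ℓ).trans (le_abs_self B))
    univ q q'
end

section
/- Let z ∈ ℂ⁺ and suppose m(z) ∈ ℂ⁺ satisfies simultaneously the equations a = -(1/n)·Tr((z·Id_p + b·Σ)^{-1}·Σ), b = -1/(1+a), and m(z) = -(1/p)·Tr((z·Id_p + b·Σ)^{-1}), where Σ is a p×p Hermitian positive semidefinite matrix, n, p ≥ 1 are integers, and z·Id_p + b·Σ is invertible with 1 + a ≠ 0. Then m(z) satisfies the Marcenko–Pastur equation: m(z) = (1/p)·Tr[((1 - p/n - (p/n)·z·m(z))·Σ - z·Id_p)^{-1}], provided that matrix is invertible. -/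
/-!
Write `A = z • 1 + b • Σ`. Multiplying `A⁻¹ * A = 1` out and taking traces gives the resolvent
identity `b · Tr(A⁻¹ Σ) = p - z · Tr(A⁻¹)`. Substituting `Tr(A⁻¹ Σ) = -n a`, `Tr(A⁻¹) = -p m`
and `b (1 + a) = -1` yields `b = -1 + p/n + (p/n) z m`, so the Marcenko–Pastur matrix is exactly
`-A`, and the trace of its inverse is `p m`.
-/

open Matrix
open scoped ComplexOrder

namespace Matrix

variable {ι K : Type*} [Fintype ι] [DecidableEq ι] [Field K]

theorem nonsing_inv_neg (A : Matrix ι ι K) : (-A)⁻¹ = -A⁻¹ := by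
  by_cases hA : IsUnit A.det
  · refine inv_eq_right_inv ?_
    rw [Matrix.neg_mul, Matrix.mul_neg, neg_neg, mul_nonsing_inv A hA]
  · have hnA : ¬IsUnit (-A).det := by
      rwa [det_neg, IsUnit.mul_iff, not_and_or, or_iff_right (by simp)]
    rw [nonsing_inv_apply_not_isUnit A hA, nonsing_inv_apply_not_isUnit _ hnA, neg_zero]

theorem smul_trace_inv_mul_add_smul (z b : K) (S : Matrix ι ι K)
    (hA : IsUnit (z • (1 : Matrix ι ι K) + b • S)) :
    b * trace ((z • 1 + b • S)⁻¹ * S) = Fintype.card ι - z * trace (z • 1 + b • S)⁻¹ := by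
  set A := z • (1 : Matrix ι ι K) + b • S
  have hres : b • (A⁻¹ * S) = 1 - z • A⁻¹ := by
    rw [← Matrix.mul_smul, show b • S = A - z • 1 by simp [A], Matrix.mul_sub,
      nonsing_inv_mul A ((isUnit_iff_isUnit_det A).mp hA), Matrix.mul_smul, Matrix.mul_one]
  simpa [trace_sub, trace_smul] using congrArg trace hres

end Matrix

theorem stmt12_general (p n : ℕ) (hp : 1 ≤ p) (hn : 1 ≤ n)
    (S : Matrix (Fin p) (Fin p) ℂ)
    (z a b m : ℂ)
    (hinv1 : IsUnit (z • (1 : Matrix (Fin p) (Fin p) ℂ) + b • S))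
    (ha1 : 1 + a ≠ 0)
    (heqa : a = -((n : ℂ))⁻¹ *
      Matrix.trace ((z • (1 : Matrix (Fin p) (Fin p) ℂ) + b • S)⁻¹ * S))
    (heqb : b = -(1 + a)⁻¹)
    (heqm : m = -((p : ℂ))⁻¹ *
      Matrix.trace ((z • (1 : Matrix (Fin p) (Fin p) ℂ) + b • S)⁻¹)) :
    m = ((p : ℂ))⁻¹ *
      Matrix.trace (((1 - (p : ℂ)/n - ((p : ℂ)/n) * z * m) • S
        - z • (1 : Matrix (Fin p) (Fin p) ℂ))⁻¹) := by
  have hpC : (p : ℂ) ≠ 0 := by exact_mod_cast (by omega : p ≠ 0)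
  have hnC : (n : ℂ) ≠ 0 := by exact_mod_cast (by omega : n ≠ 0)
  set A := z • (1 : Matrix (Fin p) (Fin p) ℂ) + b • S
  have htrA : trace A⁻¹ = -p * m := by rw [heqm]; field_simp
  have htrAS : trace (A⁻¹ * S) = -n * a := by rw [heqa]; field_simp
  have hres := smul_trace_inv_mul_add_smul z b S hinv1
  rw [Fintype.card_fin, htrA, htrAS] at hres
  have hba : b * (1 + a) = -1 := by rw [heqb]; field_simp
  have hcoef : 1 - (p : ℂ) / n - (p / n) * z * m = -b := by
    rw [eq_neg_iff_add_eq_zero]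
    field_simp
    linear_combination hres + n * hba
  have hmat : (1 - (p : ℂ) / n - (p / n) * z * m) • S - z • 1 = -A := by
    rw [hcoef]; module
  rw [hmat, nonsing_inv_neg, trace_neg, htrA]
  field_simp

/-- If `m(z) ∈ ℂ⁺` satisfies the system `a = -(1/n)·Tr((z·Id + b·Σ)⁻¹·Σ)`,
`b = -1/(1+a)`, `m(z) = -(1/p)·Tr((z·Id + b·Σ)⁻¹)`, then it satisfies the
Marcenko–Pastur equation. -/
theorem stmt12 (p n : ℕ) (hp : 1 ≤ p) (hn : 1 ≤ n)
    (S : Matrix (Fin p) (Fin p) ℂ) (hS : S.PosSemidef)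
    (z a b m : ℂ) (hz : 0 < z.im) (hm : 0 < m.im)
    (hinv1 : IsUnit (z • (1 : Matrix (Fin p) (Fin p) ℂ) + b • S))
    (ha1 : 1 + a ≠ 0)
    (heqa : a = -((n : ℂ))⁻¹ *
      Matrix.trace ((z • (1 : Matrix (Fin p) (Fin p) ℂ) + b • S)⁻¹ * S))
    (heqb : b = -(1 + a)⁻¹)
    (heqm : m = -((p : ℂ))⁻¹ *
      Matrix.trace ((z • (1 : Matrix (Fin p) (Fin p) ℂ) + b • S)⁻¹))
    (hinv2 : IsUnit ((1 - (p : ℂ)/n - ((p : ℂ)/n) * z * m) • S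
        - z • (1 : Matrix (Fin p) (Fin p) ℂ))) :
    m = ((p : ℂ))⁻¹ *
      Matrix.trace (((1 - (p : ℂ)/n - ((p : ℂ)/n) * z * m) • S
        - z • (1 : Matrix (Fin p) (Fin p) ℂ))⁻¹) :=
  stmt12_general p n hp hn S z a b m hinv1 ha1 heqa heqb heqm
end
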